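/- Let G be an edge-weighted graph, H a minimum-weight f-factor, T ⊆ E(G) \ E(H), and H' a minimum-weight f-factor among those containing T. Let S be a decomposition of E(H) Δ E(H') into edge-disjoint minimal alternating circuits. For any subfamily S' ⊆ S whose union of edge sets contains T, the f-factor Switching(H, S') has weight exactly w(H'). -/

import Mathlib

open SimpleGraph

variable {V : Type*}

/-- The quotient multigraph `H/Q` of a graph by a partition (setoid), with parts adjacent
iff some edge of `H` joins them. -/
def quotGraph (H : SimpleGraph V) (s : Setoid V) : SimpleGraph (Quotient s) where
  Adj x y := x ≠ y ∧ ∃ u v : V, Quotient.mk s u = x ∧ Quotient.mk s v = y ∧ H.Adj u v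
  symm := ⟨by rintro x y ⟨h, u, v, hu, hv, ha⟩; exact ⟨h.symm, v, u, hv, hu, ha.symm⟩⟩
  loopless := ⟨by rintro x ⟨h, _⟩; exact h rfl⟩

/-- `H` connects the partition `Q` if the quotient `H/Q` is connected. -/
def Connects (H : SimpleGraph V) (s : Setoid V) : Prop := (quotGraph H s).Connected

/-- `H` is an `f`-factor of `G`: a spanning subgraph with degree `f v` at each vertex. -/
def IsFFactor (G H : SimpleGraph V) (f : V → ℕ) : Prop :=
  H ≤ G ∧ ∀ v : V, (H.neighborSet v).ncard = f v

/-- A list of edges alternates in color, cyclically (consecutive edges have distinct colors,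
including the last/first pair for a closed tour). -/
def AltChain (red : Sym2 V → Prop) (l : List (Sym2 V)) : Prop :=
  List.Chain' (fun e f => ¬ (red e ↔ red f)) (l ++ l.take 1)

/-- `S` is an alternating circuit: it admits a closed Eulerian tour in which every pair
of consecutive edges have different colors. -/
def IsAlternatingCircuit (S : SimpleGraph V) (red : Sym2 V → Prop) : Prop :=
  letI := Classical.decEq V
  ∃ (v : V) (w : S.Walk v v), w.IsEulerian ∧ AltChain red w.edges

/-- The subgraph of `T` consisting of a single connected component `K`. -/
def compGraph (T : SimpleGraph V) (K : T.ConnectedComponent) : SimpleGraph V where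
  Adj u v := T.Adj u v ∧ T.connectedComponentMk u = K
  symm := ⟨by
    rintro u v ⟨h, hk⟩
    exact ⟨h.symm, (ConnectedComponent.sound h.symm.reachable).trans hk⟩⟩
  loopless := ⟨by rintro v ⟨h, _⟩; exact h.ne rfl⟩

/-- `S` is a switch on `H`: coloring edges of `S ∩ H` red and edges of `S \ H` blue,
every connected component of `S` is an alternating circuit. -/
def IsSwitch (S H : SimpleGraph V) : Prop :=
  ∀ K : S.ConnectedComponent, IsAlternatingCircuit (compGraph S K) (fun e => e ∈ H.edgeSet)

/-- A minimal alternating circuit: each vertex has at most two red and two blue incident edges. -/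
def IsMinimalAC (S : SimpleGraph V) (red : Sym2 V → Prop) : Prop :=
  IsAlternatingCircuit S red ∧ ∀ v : V,
    {u | S.Adj v u ∧ red s(v, u)}.ncard ≤ 2 ∧ {u | S.Adj v u ∧ ¬ red s(v, u)}.ncard ≤ 2

/-- `Switching(H, T)`: remove the edges of `T ∩ H` from `H` and add the edges of `T \ H`. -/
def switching (H T : SimpleGraph V) : SimpleGraph V where
  Adj u v := (H.Adj u v ∧ ¬ T.Adj u v) ∨ (T.Adj u v ∧ ¬ H.Adj u v)
  symm := ⟨by
    rintro u v (⟨h1, h2⟩ | ⟨h1, h2⟩)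
    · exact Or.inl ⟨h1.symm, fun h => h2 h.symm⟩
    · exact Or.inr ⟨h1.symm, fun h => h2 h.symm⟩⟩
  loopless := ⟨by rintro v (⟨h, _⟩ | ⟨h, _⟩) <;> exact h.ne rfl⟩

/-- Total weight of the edges of a graph. -/
noncomputable def wt (w : Sym2 V → ℝ) (G : SimpleGraph V) : ℝ := ∑ᶠ e ∈ G.edgeSet, w e

/-!
A minimal alternating circuit has, at each of its vertices, one red and one blue edge or two of
each, so switching `H` along any union `X` of circuits of `𝒮` keeps all degrees and yields an
`f`-factor of weight `w(H) + W(X)`, where `W` is additive over edge-disjoint graphs. Optimality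
of `H` gives `W(s) ≥ 0` for every circuit. Switching along `𝒮'` produces an `f`-factor containing
`T`, so `w(H') ≤ w(H) + W(𝒮')`, while `w(H') = w(H) + W(𝒮) = w(H) + W(𝒮') + W(𝒮 \ 𝒮')` is at
least as large.
-/

open scoped symmDiff

theorem List.isChain_append_take_one_rotate {α : Type*} {R : α → α → Prop} {l : List α}
    (h : IsChain R (l ++ l.take 1)) (n : ℕ) : IsChain R (l.rotate n ++ (l.rotate n).take 1) := by
  induction n generalizing l with
  | zero => simpa using h
  | succ n ih =>
    match l, h with
    | [], _ => simp
    | a :: t, h =>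
      rw [rotate_cons_succ]
      apply ih
      match t, h with
      | [], h => simpa using h
      | b :: t, h =>
        obtain ⟨hab, hrest⟩ := isChain_cons_cons.mp (by simpa using h)
        simpa [isChain_append_cons_cons] using ⟨hrest, hab⟩

theorem List.IsChain.rel_getLast_head_of_append_take_one {α : Type*} {R : α → α → Prop}
    {l : List α} (h : IsChain R (l ++ l.take 1)) (hl : l ≠ []) :
    R (l.getLast hl) (l.head hl) := by
  obtain ⟨a, t, rfl⟩ := List.exists_cons_of_ne_nil hl
  simpa using h.rel_getLast_head_of_append hl (by simp)

theorem AltChain.of_isRotated {red : Sym2 V → Prop} {l l' : List (Sym2 V)}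
    (h : AltChain red l) (hr : l ~r l') : AltChain red l' := by
  obtain ⟨n, rfl⟩ := hr
  exact List.isChain_append_take_one_rotate h n

theorem AltChain.getLast_head {red : Sym2 V → Prop} {l : List (Sym2 V)} (h : AltChain red l)
    (hl : l ≠ []) : ¬ (red (l.getLast hl) ↔ red (l.head hl)) :=
  List.IsChain.rel_getLast_head_of_append_take_one h hl

theorem IsAlternatingCircuit.exists_adj_red_and_not_red {S : SimpleGraph V}
    {red : Sym2 V → Prop} (h : IsAlternatingCircuit S red) {x y : V} (hxy : S.Adj x y) :
    (∃ u, S.Adj x u ∧ red s(x, u)) ∧ ∃ u, S.Adj x u ∧ ¬ red s(x, u) := by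
  classical
  obtain ⟨v, p, hp, halt⟩ := h
  have hxy' : s(x, y) ∈ p.edges := hp.mem_edges_iff.mpr hxy
  have hx : x ∈ p.support := p.fst_mem_support_of_mem_edges hxy'
  -- Rotated to start at `x`, the tour has its first and last edges at `x`, and the cyclic
  -- alternation condition compares exactly these two.
  have hrot := p.rotate_edges x hx
  set q := p.rotate x hx
  have hne : q.edges ≠ [] := List.ne_nil_of_mem (hrot.mem_iff.mpr hxy')
  have hnil : ¬ q.Nil := by rwa [← Walk.edges_eq_nil]
  have hwrap := (halt.of_isRotated hrot.symm).getLast_head hne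
  rw [Walk.getLast_edges_eq_mk_penultimate_end, Walk.head_edges_eq_mk_start_snd,
    Sym2.eq_swap] at hwrap
  by_cases hred : red s(x, q.snd)
  · exact ⟨⟨_, q.adj_snd hnil, hred⟩, _, (q.adj_penultimate hnil).symm, by tauto⟩
  · exact ⟨⟨_, (q.adj_penultimate hnil).symm, by tauto⟩, _, q.adj_snd hnil, hred⟩

theorem IsAlternatingCircuit.even_ncard_neighborSet [Finite V] {S : SimpleGraph V}
    {red : Sym2 V → Prop} (h : IsAlternatingCircuit S red) (x : V) :
    Even (S.neighborSet x).ncard := by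
  classical
  have := Fintype.ofFinite V
  obtain ⟨v, p, hp, -⟩ := h
  rw [Set.ncard_eq_toFinset_card', ← neighborFinset_def, card_neighborFinset_eq_degree]
  exact hp.even_degree_iff.mpr (absurd rfl)

theorem Set.Finite.sSup_induction_of_pairwiseDisjoint {α : Type*} [Order.Frame α]
    {P : α → Prop} (hbot : P ⊥) (hsup : ∀ a b, Disjoint a b → P a → P b → P (a ⊔ b))
    {s : Set α} (hs : s.Finite) (hd : s.PairwiseDisjoint id) (h : ∀ a ∈ s, P a) :
    P (sSup s) := by
  induction s, hs using Set.Finite.induction_on with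
  | empty => simpa
  | @insert a s ha _ ih =>
    rw [sSup_insert]
    refine hsup _ _ (disjoint_sSup_iff.mpr fun b hb => ?_) (h a (Set.mem_insert a s))
      (ih (hd.subset (Set.subset_insert a s)) fun b hb => h b (Set.mem_insert_of_mem a hb))
    exact hd (Set.mem_insert a s) (Set.mem_insert_of_mem a hb) (ne_of_mem_of_not_mem hb ha).symm

theorem Set.PairwiseDisjoint.disjoint_sSup_sdiff {α : Type*} [Order.Frame α] {s t : Set α}
    (hs : s.PairwiseDisjoint id) (ht : t ⊆ s) : Disjoint (sSup t) (sSup (s \ t)) :=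
  sSup_disjoint_iff.mpr fun _ ha => disjoint_sSup_iff.mpr fun _ hb =>
    hs (ht ha) hb.1 (ne_of_mem_of_not_mem ha hb.2)

theorem ncard_neighborSet_sup [Finite V] {A B : SimpleGraph V} (hd : Disjoint A B) (x : V) :
    ((A ⊔ B).neighborSet x).ncard = (A.neighborSet x).ncard + (B.neighborSet x).ncard := by
  rw [neighborSet_sup]
  exact Set.ncard_union_eq (disjoint_neighborSet.mpr hd x)

/-- At every vertex, `X` has as many red edges (in `H`) as blue ones (not in `H`), so that
switching `H` along `X` preserves degrees. -/
def IsBalanced (H X : SimpleGraph V) : Prop :=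
  ∀ x, ((X ⊓ H).neighborSet x).ncard = ((X \ H).neighborSet x).ncard

theorem isBalanced_bot (H : SimpleGraph V) : IsBalanced H ⊥ := fun _ => by simp

theorem IsBalanced.sup [Finite V] {H A B : SimpleGraph V} (hd : Disjoint A B)
    (hA : IsBalanced H A) (hB : IsBalanced H B) : IsBalanced H (A ⊔ B) := fun x => by
  rw [inf_sup_right, sup_sdiff, ncard_neighborSet_sup (hd.mono inf_le_left inf_le_left),
    ncard_neighborSet_sup (hd.mono sdiff_le sdiff_le), hA x, hB x]

theorem isBalanced_sSup [Finite V] {H : SimpleGraph V} {𝒜 : Set (SimpleGraph V)}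
    (hd : 𝒜.PairwiseDisjoint id) (h : ∀ X ∈ 𝒜, IsBalanced H X) :
    IsBalanced H (sSup 𝒜) :=
  (Set.toFinite 𝒜).sSup_induction_of_pairwiseDisjoint (isBalanced_bot H)
    (fun _ _ hd => IsBalanced.sup hd) hd h

/-- At a vertex of a minimal alternating circuit the red and the blue degree are both `1` or
both `2`: each is positive and at most `2`, and their sum is even. -/
theorem IsMinimalAC.isBalanced [Finite V] {S H : SimpleGraph V}
    (h : IsMinimalAC S (· ∈ H.edgeSet)) : IsBalanced H S := by
  obtain ⟨hc, hbound⟩ := h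
  intro x
  have hsum : ((S ⊓ H).neighborSet x).ncard + ((S \ H).neighborSet x).ncard
      = (S.neighborSet x).ncard := by
    rw [← ncard_neighborSet_sup disjoint_inf_sdiff, sup_inf_sdiff]
  have heven := hc.even_ncard_neighborSet x
  have hred : ((S ⊓ H).neighborSet x).ncard ≤ 2 := (hbound x).1
  have hblue : ((S \ H).neighborSet x).ncard ≤ 2 := (hbound x).2
  rcases (S.neighborSet x).eq_empty_or_nonempty with h0 | ⟨y, hy⟩
  · rw [h0, Set.ncard_empty] at hsum
    omega
  · obtain ⟨⟨u, hu, hur⟩, v, hv, hvb⟩ := hc.exists_adj_red_and_not_red hy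
    have : 0 < ((S ⊓ H).neighborSet x).ncard :=
      (Set.ncard_pos (Set.toFinite _)).mpr ⟨u, hu, hur⟩
    have : 0 < ((S \ H).neighborSet x).ncard :=
      (Set.ncard_pos (Set.toFinite _)).mpr ⟨v, hv, hvb⟩
    obtain ⟨k, hk⟩ := heven
    omega

theorem switching_eq_symmDiff (H X : SimpleGraph V) : switching H X = H ∆ X := rfl

theorem switching_le {G H X : SimpleGraph V} (hH : H ≤ G) (hX : X ≤ G) : switching H X ≤ G :=
  symmDiff_le_sup.trans (sup_le hH hX)

theorem IsFFactor.switching [Finite V] {G H X : SimpleGraph V} {f : V → ℕ}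
    (hH : IsFFactor G H f) (hXG : X ≤ G) (hX : IsBalanced H X) :
    IsFFactor G (switching H X) f := by
  refine ⟨switching_le hH.1 hXG, fun x => ?_⟩
  rw [switching_eq_symmDiff, symmDiff_def, ncard_neighborSet_sup disjoint_sdiff_sdiff, ← hX x,
    inf_comm, ← ncard_neighborSet_sup disjoint_inf_sdiff.symm, sup_sdiff_inf, hH.2 x]

theorem wt_sup [Finite V] (w : Sym2 V → ℝ) {A B : SimpleGraph V} (hd : Disjoint A B) :
    wt w (A ⊔ B) = wt w A + wt w B := by
  rw [wt, wt, wt, edgeSet_sup]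
  exact finsum_mem_union (disjoint_edgeSet.mpr hd) (Set.toFinite _) (Set.toFinite _)

/-- The paper's `W`: blue weight minus red weight of `X`, red meaning "edge of `H`". -/
noncomputable def switchGain (w : Sym2 V → ℝ) (H X : SimpleGraph V) : ℝ :=
  wt w (X \ H) - wt w (X ⊓ H)

theorem wt_switching [Finite V] (w : Sym2 V → ℝ) (H X : SimpleGraph V) :
    wt w (switching H X) = wt w H + switchGain w H X := by
  have hsw : wt w (switching H X) = wt w (H \ X) + wt w (X \ H) := by
    rw [switching_eq_symmDiff, symmDiff_def, wt_sup w disjoint_sdiff_sdiff]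
  have hH : wt w H = wt w (H \ X) + wt w (X ⊓ H) := by
    rw [inf_comm, ← wt_sup w disjoint_inf_sdiff.symm, sup_sdiff_inf]
  rw [hsw, hH, switchGain]
  ring

theorem switchGain_sup [Finite V] (w : Sym2 V → ℝ) (H : SimpleGraph V) {A B : SimpleGraph V}
    (hd : Disjoint A B) : switchGain w H (A ⊔ B) = switchGain w H A + switchGain w H B := by
  rw [switchGain, sup_sdiff, inf_sup_right, wt_sup w (hd.mono sdiff_le sdiff_le),
    wt_sup w (hd.mono inf_le_left inf_le_left), switchGain, switchGain]
  ring

theorem switchGain_sSup_nonneg [Finite V] (w : Sym2 V → ℝ) (H : SimpleGraph V)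
    {𝒜 : Set (SimpleGraph V)} (hd : 𝒜.PairwiseDisjoint id)
    (h : ∀ X ∈ 𝒜, 0 ≤ switchGain w H X) : 0 ≤ switchGain w H (sSup 𝒜) :=
  (Set.toFinite 𝒜).sSup_induction_of_pairwiseDisjoint (by simp [switchGain, wt])
    (fun _ _ hd ha hb => (switchGain_sup w H hd).symm ▸ add_nonneg ha hb) hd h

theorem switchGain_nonneg_of_forall_wt_le [Finite V] {G H X : SimpleGraph V} {f : V → ℕ}
    {w : Sym2 V → ℝ} (hH : IsFFactor G H f)
    (hHmin : ∀ H2 : SimpleGraph V, IsFFactor G H2 f → wt w H ≤ wt w H2) (hXG : X ≤ G)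
    (hX : IsBalanced H X) : 0 ≤ switchGain w H X := by
  have := hHmin _ (hH.switching hXG hX)
  rw [wt_switching] at this
  linarith

theorem stmt13 {V : Type*} [Fintype V] (G : SimpleGraph V) (w : Sym2 V → ℝ)
    (f : V → ℕ) (H H' : SimpleGraph V) (T : Set (Sym2 V))
    (hT : T ⊆ G.edgeSet \ H.edgeSet)
    (hH : IsFFactor G H f)
    (hHmin : ∀ H2 : SimpleGraph V, IsFFactor G H2 f → wt w H ≤ wt w H2)
    (hH' : IsFFactor G H' f ∧ T ⊆ H'.edgeSet)
    (hH'min : ∀ H2 : SimpleGraph V, IsFFactor G H2 f → T ⊆ H2.edgeSet → wt w H' ≤ wt w H2)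
    (𝒮 : Set (SimpleGraph V))
    (hmin : ∀ s ∈ 𝒮, IsMinimalAC s (fun e => e ∈ H.edgeSet))
    (hdisj : 𝒮.Pairwise fun a b => Disjoint a.edgeSet b.edgeSet)
    (hdecomp : (⋃ s ∈ 𝒮, s.edgeSet) = (switching H H').edgeSet) :
    ∀ 𝒮' ⊆ 𝒮, T ⊆ (⋃ s ∈ 𝒮', s.edgeSet) →
      wt w (switching H (sSup 𝒮')) = wt w H' := by
  intro 𝒮' h𝒮' hT𝒮'
  have hd : 𝒮.PairwiseDisjoint id := hdisj.mono' fun _ _ => disjoint_edgeSet.mp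
  have hS : sSup 𝒮 = switching H H' :=
    edgeSet_injective (by rw [edgeSet_sSup, Set.sUnion_image, hdecomp])
  have hSG : ∀ s ∈ 𝒮, s ≤ G := fun s hs =>
    (le_sSup hs).trans (hS ▸ switching_le hH.1 hH'.1.1)
  have hgain : ∀ 𝒜 ⊆ 𝒮, 0 ≤ switchGain w H (sSup 𝒜) := fun 𝒜 h𝒜 =>
    switchGain_sSup_nonneg w H (hd.subset h𝒜) fun s hs =>
      switchGain_nonneg_of_forall_wt_le hH hHmin (hSG s (h𝒜 hs)) (hmin s (h𝒜 hs)).isBalanced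
  have hfac : IsFFactor G (switching H (sSup 𝒮')) f :=
    hH.switching (sSup_le fun s hs => hSG s (h𝒮' hs))
      (isBalanced_sSup (hd.subset h𝒮') fun s hs => (hmin s (h𝒮' hs)).isBalanced)
  have hTsub : T ⊆ (switching H (sSup 𝒮')).edgeSet := fun e he => by
    rw [switching_eq_symmDiff, symmDiff_def, edgeSet_sup, edgeSet_sdiff, edgeSet_sdiff,
      edgeSet_sSup, Set.sUnion_image]
    exact Or.inr ⟨hT𝒮' he, (hT he).2⟩
  have hsplit : switchGain w H (sSup 𝒮) =
      switchGain w H (sSup 𝒮') + switchGain w H (sSup (𝒮 \ 𝒮')) := by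
    rw [← switchGain_sup w H (hd.disjoint_sSup_sdiff h𝒮'), ← sSup_union,
      Set.union_sdiff_cancel h𝒮']
  have hH'wt : wt w H' = wt w H + switchGain w H (sSup 𝒮) := by
    rw [← wt_switching, hS]
    simp only [switching_eq_symmDiff, symmDiff_symmDiff_cancel_left]
  have hH'le := hH'min _ hfac hTsub
  rw [wt_switching] at hH'le ⊢
  linarith [hgain (𝒮 \ 𝒮') Set.sdiff_subset]
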